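/- arXiv:2306.09652 — 2 statements merged into one kernel-verified Lean document; each statement's English description precedes it below -/
import Mathlib

section
/- Let z be a quaternion and let τ > 0. Define a* = (z/‖z‖)·max(‖z‖−τ, 0) if z ≠ 0 and a* = 0 if z = 0. Then a* is the unique global minimizer over ℍ of the function f(a) = (1/2)‖a − z‖² + τ‖a‖; that is, f(a*) ≤ f(a) for every quaternion a, with equality only when a = a*. -/
open scoped Classical

open scoped RealInnerProductSpace

private lemma shrink_key (z : Quaternion ℝ) (τ : ℝ) (hτ : 0 < τ) :
    let astar : Quaternion ℝ :=
      if z = 0 then 0 else (max (‖z‖ - τ) 0 / ‖z‖) • z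
    (⟪astar, astar - z⟫ + τ * ‖astar‖ = 0) ∧
      (∀ a : Quaternion ℝ, 0 ≤ ⟪a, astar - z⟫ + τ * ‖a‖) := by
  intro astar
  by_cases hz : z = 0
  · have ha : astar = 0 := by simp [astar, hz]
    constructor
    · simp [ha, hz]
    · intro a
      simp [ha, hz]
      positivity
  · have hz0 : (0:ℝ) < ‖z‖ := norm_pos_iff.mpr hz
    set m : ℝ := max (‖z‖ - τ) 0 with hm
    have hm0 : 0 ≤ m := le_max_right _ _
    have hmz : m ≤ ‖z‖ := by
      rcases max_cases (‖z‖ - τ) 0 with ⟨h1, _⟩ | ⟨h1, _⟩ <;> rw [← hm] at h1 <;> linarith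
    have ha : astar = (m / ‖z‖) • z := by simp [astar, hz, hm]
    have hdiff : astar - z = ((m - ‖z‖) / ‖z‖) • z := by
      rw [ha, show (m - ‖z‖) / ‖z‖ = m / ‖z‖ - 1 by field_simp, sub_smul, one_smul]
    have hinner_z : ⟪z, z⟫ = ‖z‖ ^ 2 := real_inner_self_eq_norm_sq z
    have hnd : ‖astar - z‖ = ‖z‖ - m := by
      rw [hdiff, norm_smul]
      have : ‖(m - ‖z‖) / ‖z‖‖ = (‖z‖ - m) / ‖z‖ := by
        rw [Real.norm_eq_abs, abs_div, abs_of_nonneg (le_of_lt hz0),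
          abs_of_nonpos (by linarith), neg_sub]
      rw [this, div_mul_cancel₀ _ (ne_of_gt hz0)]
    have hndτ : ‖astar - z‖ ≤ τ := by
      rw [hnd]
      rcases max_cases (‖z‖ - τ) 0 with ⟨h1, _⟩ | ⟨h1, h2⟩ <;> rw [← hm] at h1 <;> linarith
    constructor
    · have h1 : ⟪astar, astar - z⟫ = m * (m - ‖z‖) := by
        rw [hdiff, ha, real_inner_smul_left, real_inner_smul_right, hinner_z]
        field_simp
      have h2 : ‖astar‖ = m := by
        rw [ha, norm_smul, Real.norm_eq_abs, abs_div, abs_of_nonneg hm0,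
          abs_of_nonneg (le_of_lt hz0), div_mul_cancel₀ _ (ne_of_gt hz0)]
      rw [h1, h2]
      rcases max_cases (‖z‖ - τ) 0 with ⟨h3, _⟩ | ⟨h3, _⟩ <;> rw [← hm] at h3 <;>
        rw [h3] <;> ring_nf
    · intro a
      have h1 : -(‖a‖ * ‖astar - z‖) ≤ ⟪a, astar - z⟫ :=
        neg_le_of_abs_le (abs_real_inner_le_norm a (astar - z))
      have h2 : ‖a‖ * ‖astar - z‖ ≤ ‖a‖ * τ :=
        mul_le_mul_of_nonneg_left hndτ (norm_nonneg a)
      nlinarith [norm_nonneg a]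

/-- For `z : ℍ` and `τ > 0`, the quaternion shrinkage
`a* = (z/‖z‖)·max(‖z‖−τ,0)` (and `a* = 0` if `z = 0`) is the unique global
minimizer of `f(a) = (1/2)‖a − z‖² + τ‖a‖` over the quaternions. -/
theorem quaternion_shrinkage_unique_minimizer
    (z : Quaternion ℝ) (τ : ℝ) (hτ : 0 < τ) :
    let astar : Quaternion ℝ :=
      if z = 0 then 0 else (max (‖z‖ - τ) 0 / ‖z‖) • z
    let f : Quaternion ℝ → ℝ := fun a => (1 / 2) * ‖a - z‖ ^ 2 + τ * ‖a‖
    (∀ a : Quaternion ℝ, f astar ≤ f a) ∧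
      (∀ a : Quaternion ℝ, f astar = f a → a = astar) := by
  intro astar f
  obtain ⟨hkey1, hkey2⟩ := shrink_key z τ hτ
  have main : ∀ a : Quaternion ℝ, f astar + (1/2) * ‖a - astar‖ ^ 2 ≤ f a := by
    intro a
    have e1 : ‖a - z‖ ^ 2 = ‖a‖ ^ 2 - 2 * ⟪a, z⟫ + ‖z‖ ^ 2 := norm_sub_sq_real a z
    have e2 : ‖astar - z‖ ^ 2 = ‖astar‖ ^ 2 - 2 * ⟪astar, z⟫ + ‖z‖ ^ 2 :=
      norm_sub_sq_real astar z
    have e3 : ‖a - astar‖ ^ 2 = ‖a‖ ^ 2 - 2 * ⟪a, astar⟫ + ‖astar‖ ^ 2 :=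
      norm_sub_sq_real a astar
    have e4 : ⟪a, astar - z⟫ = ⟪a, astar⟫ - ⟪a, z⟫ := inner_sub_right a astar z
    have e5 : ⟪astar, astar - z⟫ = ⟪astar, astar⟫ - ⟪astar, z⟫ :=
      inner_sub_right astar astar z
    have e6 : ⟪astar, astar⟫ = ‖astar‖ ^ 2 := real_inner_self_eq_norm_sq astar
    have h2 := hkey2 a
    simp only [f]
    nlinarith [hkey1]
  constructor
  · intro a
    have h := main a
    have h0 : 0 ≤ 1 / 2 * ‖a - astar‖ ^ 2 := by positivity
    simp only [f] at h ⊢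
    linarith
  · intro a heq
    have := main a
    have hnorm : ‖a - astar‖ ^ 2 ≤ 0 := by
      have h := main a
      simp only [f] at h heq
      linarith
    have : ‖a - astar‖ = 0 := by nlinarith [sq_nonneg ‖a - astar‖, norm_nonneg (a - astar)]
    have := norm_eq_zero.mp this
    exact sub_eq_zero.mp this
end

section
/- Let Z be an m×n quaternion matrix and let τ > 0. Define the m×n quaternion matrix A* entrywise by A*_{ij} = (z_{ij}/‖z_{ij}‖)·max(‖z_{ij}‖−τ, 0) if z_{ij} ≠ 0 and A*_{ij} = 0 otherwise. Then A* is the unique global minimizer over all m×n quaternion matrices A of the function F(A) = (1/2)‖A − Z‖_F² + τ‖A‖₁, i.e., F(A*) ≤ F(A) for all A, with equality only when A = A*. -/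
/-!
Entrywise, `z - shrink τ z` is `τ` times a subgradient of the norm at `shrink τ z`. Expanding
`‖a - z‖²` around `shrink τ z`, this first-order condition gives the quadratic growth bound
`F A* + ½ ‖A - A*‖_F² ≤ F A`, from which both minimality and uniqueness follow.
-/

open scoped Classical RealInnerProductSpace

section Shrink

variable {E : Type*} [NormedAddCommGroup E] [InnerProductSpace ℝ E]

noncomputable def shrink (τ : ℝ) (z : E) : E :=
  if z = 0 then 0 else (max (‖z‖ - τ) 0 / ‖z‖) • z

lemma shrink_of_norm_le {τ : ℝ} {z : E} (h : ‖z‖ ≤ τ) : shrink τ z = 0 := by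
  unfold shrink
  split_ifs <;> simp [max_eq_right (sub_nonpos.mpr h)]

lemma shrink_of_lt_norm {τ : ℝ} {z : E} (hτ : 0 ≤ τ) (h : τ < ‖z‖) :
    shrink τ z = (1 - τ / ‖z‖) • z := by
  have hz : 0 < ‖z‖ := hτ.trans_lt h
  rw [shrink, if_neg (norm_pos_iff.mp hz), max_eq_left (sub_nonneg.mpr h.le)]
  congr 1
  field_simp

lemma inner_sub_shrink_le {τ : ℝ} (hτ : 0 ≤ τ) (z a : E) :
    ⟪a - shrink τ z, z - shrink τ z⟫ ≤ τ * (‖a‖ - ‖shrink τ z‖) := by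
  rcases le_or_gt ‖z‖ τ with h | h
  · rw [shrink_of_norm_le h]
    calc ⟪a - 0, z - 0⟫ ≤ ‖a‖ * ‖z‖ := by simpa using real_inner_le_norm a z
      _ ≤ τ * (‖a‖ - ‖(0 : E)‖) := by rw [norm_zero, sub_zero, mul_comm]; gcongr
  · have hz : 0 < ‖z‖ := hτ.trans_lt h
    have hc : 0 ≤ 1 - τ / ‖z‖ := by
      rw [sub_nonneg, div_le_one hz]
      exact h.le
    rw [shrink_of_lt_norm hτ h, norm_smul, Real.norm_of_nonneg hc]
    have hsub : z - (1 - τ / ‖z‖) • z = (τ / ‖z‖) • z := by module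
    rw [hsub, inner_smul_right, inner_sub_left, inner_smul_left,
      real_inner_self_eq_norm_sq]
    have := real_inner_le_norm a z
    simp only [RCLike.conj_to_real]
    field_simp
    nlinarith

lemma shrink_add_sq_norm_sub_le {τ : ℝ} (hτ : 0 ≤ τ) (z a : E) :
    (1 / 2) * ‖shrink τ z - z‖ ^ 2 + τ * ‖shrink τ z‖ + (1 / 2) * ‖a - shrink τ z‖ ^ 2
      ≤ (1 / 2) * ‖a - z‖ ^ 2 + τ * ‖a‖ := by
  have hsplit : a - z = (a - shrink τ z) + (shrink τ z - z) := by abel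
  have hsub := inner_sub_shrink_le hτ z a
  rw [hsplit, norm_add_sq_real, ← neg_sub z, inner_neg_right, norm_neg]
  linarith

end Shrink

/-- Entrywise quaternion shrinkage is the unique global minimizer of
`F(A) = (1/2)‖A − Z‖_F² + τ‖A‖₁` over all `m×n` quaternion matrices. -/
theorem quaternion_matrix_shrinkage_unique_minimizer
    (m n : ℕ) (Z : Matrix (Fin m) (Fin n) (Quaternion ℝ)) (τ : ℝ) (hτ : 0 < τ) :
    let Astar : Matrix (Fin m) (Fin n) (Quaternion ℝ) :=
      fun i j => if Z i j = 0 then 0 else (max (‖Z i j‖ - τ) 0 / ‖Z i j‖) • Z i j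
    let F : Matrix (Fin m) (Fin n) (Quaternion ℝ) → ℝ :=
      fun A => (1 / 2) * (∑ i, ∑ j, ‖A i j - Z i j‖ ^ 2) + τ * (∑ i, ∑ j, ‖A i j‖)
    (∀ A : Matrix (Fin m) (Fin n) (Quaternion ℝ), F Astar ≤ F A) ∧
      (∀ A : Matrix (Fin m) (Fin n) (Quaternion ℝ), F Astar = F A → A = Astar) := by
  intro Astar F
  have growth (A) : F Astar + (1 / 2) * ∑ i, ∑ j, ‖A i j - Astar i j‖ ^ 2 ≤ F A := by
    simp only [F, Finset.mul_sum, ← Finset.sum_add_distrib]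
    refine Finset.sum_le_sum fun i _ => Finset.sum_le_sum fun j _ => ?_
    exact shrink_add_sq_norm_sub_le hτ.le (Z i j) (A i j)
  refine ⟨fun A => ?_, fun A hA => ?_⟩
  · have : 0 ≤ ∑ i, ∑ j, ‖A i j - Astar i j‖ ^ 2 := by positivity
    linarith [growth A]
  · have h0 : ∑ i, ∑ j, ‖A i j - Astar i j‖ ^ 2 = 0 :=
      le_antisymm (by linarith [growth A]) (by positivity)
    ext1 i j
    have hi :=
      (Finset.sum_eq_zero_iff_of_nonneg fun i _ => by positivity).1 h0 i (Finset.mem_univ i)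
    have hij :=
      (Finset.sum_eq_zero_iff_of_nonneg fun j _ => by positivity).1 hi j (Finset.mem_univ j)
    simpa [sub_eq_zero] using hij
end
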